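/- arXiv:2403.04713 — 6 statements merged into one kernel-verified Lean document; each statement's English description precedes it below -/
import Mathlib

section
/- Let I be a finite index set and for each i in I let C_i and S_i be Hermitian operators on a finite-dimensional Hilbert space A_i such that C_i ≤ S_i and -C_i ≤ S_i. Then the tensor product ⊗_i C_i satisfies ⊗_i C_i ≤ ⊗_i S_i and -(⊗_i C_i) ≤ ⊗_i S_i (inequalities in the Loewner order on ⊗_i A_i). -/
open Matrix ComplexOrder

/-- Tensor product over a finite index set, realised as a matrix on the Pi type. -/
noncomputable def piTensor {I : Type*} [Fintype I] {d : I → ℕ}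
    (M : ∀ i, Matrix (Fin (d i)) (Fin (d i)) ℂ) :
    Matrix (∀ i, Fin (d i)) (∀ i, Fin (d i)) ℂ :=
  Matrix.of fun a b => ∏ i, M i (a i) (b i)

/-!
With `P i = (S i + C i) / 2` and `Q i = (S i - C i) / 2`, both positive semidefinite, we have
`S i = P i + Q i` and `C i = P i - Q i`. Expanding both tensor products multilinearly,
`⊗ S + ε ⊗ C = ∑_T (1 + ε (-1) ^ #Tᶜ) (⊗_{i ∈ T} P i) ⊗ (⊗_{i ∉ T} Q i)`,
and for `-1 ≤ ε ≤ 1` this is a nonnegative combination of tensor products of positive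
semidefinite matrices, each of which is `(⊗ B i)ᴴ (⊗ B i)` when `P i = (B i)ᴴ B i`.
-/

section

variable {I : Type*} [Fintype I] {d : I → ℕ}

theorem piTensor_mul [DecidableEq I] (A B : ∀ i, Matrix (Fin (d i)) (Fin (d i)) ℂ) :
    piTensor (fun i => A i * B i) = piTensor A * piTensor B := by
  ext a b
  simp only [piTensor, of_apply, mul_apply, Fintype.prod_sum, Finset.prod_mul_distrib]

theorem conjTranspose_piTensor (A : ∀ i, Matrix (Fin (d i)) (Fin (d i)) ℂ) :
    (piTensor A)ᴴ = piTensor (fun i => (A i)ᴴ) := by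
  ext a b
  simp [piTensor, star_prod]

open scoped MatrixOrder in
theorem posSemidef_piTensor {M : ∀ i, Matrix (Fin (d i)) (Fin (d i)) ℂ}
    (hM : ∀ i, (M i).PosSemidef) : (piTensor M).PosSemidef := by
  classical
  choose B hB using fun i => CStarAlgebra.nonneg_iff_eq_star_mul_self.mp (hM i).nonneg
  obtain rfl : M = fun i => (B i)ᴴ * B i := funext hB
  rw [piTensor_mul, ← conjTranspose_piTensor]
  exact posSemidef_conjTranspose_mul_self _

theorem piTensor_add_smul_eq_sum [DecidableEq I] (ε : ℂ)
    (P Q : ∀ i, Matrix (Fin (d i)) (Fin (d i)) ℂ) :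
    piTensor (fun i => P i + ε • Q i) =
      ∑ T : Finset I, ε ^ Tᶜ.card • piTensor (fun i => if i ∈ T then P i else Q i) := by
  ext a b
  simp only [piTensor, of_apply, Matrix.sum_apply, Matrix.smul_apply, Matrix.add_apply, smul_eq_mul,
    Fintype.prod_add, Finset.prod_mul_distrib, Finset.prod_const]
  refine Finset.sum_congr rfl fun T _ => ?_
  have hmixed : ∏ i, (if i ∈ T then P i else Q i) (a i) (b i) =
      (∏ i ∈ T, P i (a i) (b i)) * ∏ i ∈ Tᶜ, Q i (a i) (b i) := by
    rw [← Finset.prod_mul_prod_compl T]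
    congr 1 <;> refine Finset.prod_congr rfl fun i hi => ?_
    · rw [if_pos hi]
    · rw [if_neg (Finset.mem_compl.mp hi)]
  rw [hmixed]
  ring

theorem posSemidef_piTensor_add_add_smul_piTensor_sub
    {P Q : ∀ i, Matrix (Fin (d i)) (Fin (d i)) ℂ}
    (hP : ∀ i, (P i).PosSemidef) (hQ : ∀ i, (Q i).PosSemidef) {ε : ℂ}
    (hplus : 0 ≤ 1 + ε) (hminus : 0 ≤ 1 - ε) :
    (piTensor (fun i => P i + Q i) + ε • piTensor (fun i => P i - Q i)).PosSemidef := by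
  classical
  have hsum := piTensor_add_smul_eq_sum 1 P Q
  have hdiff := piTensor_add_smul_eq_sum (-1) P Q
  simp only [one_smul, neg_one_smul, ← sub_eq_add_neg] at hsum hdiff
  rw [hsum, hdiff, Finset.smul_sum, ← Finset.sum_add_distrib]
  refine posSemidef_sum _ fun T _ => ?_
  rw [smul_smul, ← add_smul]
  refine PosSemidef.smul (posSemidef_piTensor fun i => ?_) ?_
  · split_ifs
    · exact hP i
    · exact hQ i
  · rcases Nat.even_or_odd Tᶜ.card with h | h
    · simpa [h.neg_one_pow] using hplus
    · simpa [h.neg_one_pow, sub_eq_add_neg] using hminus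

theorem posSemidef_piTensor_add_smul_piTensor {C S : ∀ i, Matrix (Fin (d i)) (Fin (d i)) ℂ}
    (hsub : ∀ i, (S i - C i).PosSemidef) (hadd : ∀ i, (S i + C i).PosSemidef) {ε : ℂ}
    (hplus : 0 ≤ 1 + ε) (hminus : 0 ≤ 1 - ε) :
    (piTensor S + ε • piTensor C).PosSemidef := by
  set P := fun i => (2 : ℂ)⁻¹ • (S i + C i)
  set Q := fun i => (2 : ℂ)⁻¹ • (S i - C i)
  have hS : S = fun i => P i + Q i := by ext1 i; simp only [P, Q]; module
  have hC : C = fun i => P i - Q i := by ext1 i; simp only [P, Q]; module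
  rw [hS, hC]
  exact posSemidef_piTensor_add_add_smul_piTensor_sub
    (fun i => (hadd i).smul (by positivity)) (fun i => (hsub i).smul (by positivity))
    hplus hminus

end

theorem tensorized_loewner_bound_general {I : Type*} [Fintype I] {d : I → ℕ}
    (C S : ∀ i, Matrix (Fin (d i)) (Fin (d i)) ℂ)
    (h₁ : ∀ i, (S i - C i).PosSemidef) (h₂ : ∀ i, (S i + C i).PosSemidef) :
    (piTensor S - piTensor C).PosSemidef ∧ (piTensor S + piTensor C).PosSemidef := by
  constructor
  · simpa [← sub_eq_add_neg] using
      posSemidef_piTensor_add_smul_piTensor h₁ h₂ (ε := -1) (by norm_num) (by norm_num)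
  · simpa using
      posSemidef_piTensor_add_smul_piTensor h₁ h₂ (ε := 1) (by norm_num) (by norm_num)

theorem tensorized_loewner_bound {I : Type*} [Fintype I] [DecidableEq I] {d : I → ℕ}
    (C S : ∀ i, Matrix (Fin (d i)) (Fin (d i)) ℂ)
    (hC : ∀ i, (C i).IsHermitian) (hS : ∀ i, (S i).IsHermitian)
    (h₁ : ∀ i, (S i - C i).PosSemidef) (h₂ : ∀ i, (S i + C i).PosSemidef) :
    (piTensor S - piTensor C).PosSemidef ∧ (piTensor S + piTensor C).PosSemidef :=
  tensorized_loewner_bound_general C S h₁ h₂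
end

section
/- For vectors a, r in {0,1}^n and a fixed bit k, the sum over all a in {0,1}^n of (1/2)[1 + (-1)^{a·1 + k}] · (-1)^{a·r} equals 2^{n-1}[δ_{r,0} + (-1)^k δ_{r,1}], where 0 = (0,...,0), 1 = (1,...,1), and a·r denotes the inner product mod 2 computed over the integers in the exponent. -/
/-! Expanding `(1 + (-1)^(|a| + k)) / 2` splits the sum into two character sums of `(ℤ/2)ⁿ`,
one for `r` and one for `r + 1`, because `(-1)^|a| (-1)^(a·r) = (-1)^(a·(r + 1))`.
By orthogonality of characters these are `2ⁿ [r = 0]` and `2ⁿ [r = 1]`. -/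

open Finset

section ParityCharacters

variable {R : Type*} [CommRing R] {ι : Type*} [Fintype ι]

lemma sum_fin_two_neg_one_pow_mul (c : Fin 2) :
    ∑ x : Fin 2, (-1 : R) ^ ((x : ℕ) * (c : ℕ)) = if c = 0 then 2 else 0 := by
  fin_cases c <;> simp [Fin.sum_univ_two]

lemma sum_neg_one_pow_sum_mul [DecidableEq ι] (c : ι → Fin 2) :
    ∑ a : ι → Fin 2, (-1 : R) ^ (∑ i, (a i : ℕ) * (c i : ℕ)) =
      if c = 0 then 2 ^ Fintype.card ι else 0 := by
  calc ∑ a : ι → Fin 2, (-1 : R) ^ (∑ i, (a i : ℕ) * (c i : ℕ))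
      = ∏ i, ∑ x : Fin 2, (-1 : R) ^ ((x : ℕ) * (c i : ℕ)) := by
        simp only [Fintype.prod_sum, prod_pow_eq_pow_sum]
    _ = if c = 0 then 2 ^ Fintype.card ι else 0 := by
        simp only [sum_fin_two_neg_one_pow_mul, Fintype.prod_ite_zero, prod_const, card_univ,
          funext_iff, Pi.zero_apply]

lemma neg_one_pow_add_mul_fin_two (x y : Fin 2) :
    (-1 : R) ^ ((x : ℕ) + (x : ℕ) * (y : ℕ)) = (-1 : R) ^ ((x : ℕ) * ((y + 1 : Fin 2) : ℕ)) := by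
  fin_cases x <;> fin_cases y <;> simp

lemma neg_one_pow_sum_add_sum_mul (a r : ι → Fin 2) :
    (-1 : R) ^ (∑ i, (a i : ℕ) + ∑ i, (a i : ℕ) * (r i : ℕ)) =
      (-1 : R) ^ (∑ i, (a i : ℕ) * ((r + 1) i : ℕ)) := by
  simp only [← sum_add_distrib, ← prod_pow_eq_pow_sum, neg_one_pow_add_mul_fin_two, Pi.add_apply,
    Pi.one_apply]

end ParityCharacters

lemma add_one_eq_zero_iff_fin_two {ι : Type*} (r : ι → Fin 2) : r + 1 = 0 ↔ r = 1 := by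
  rw [add_eq_zero_iff_eq_neg, show (-1 : ι → Fin 2) = 1 from rfl]

theorem xor_character_sum {n : ℕ} (hn : 0 < n) (k : Fin 2) (r : Fin n → Fin 2) :
    ∑ a : Fin n → Fin 2,
        (1 / 2 : ℝ) * (1 + (-1 : ℝ) ^ ((∑ i, (a i : ℕ)) + (k : ℕ))) *
          (-1 : ℝ) ^ (∑ i, (a i : ℕ) * (r i : ℕ)) =
      2 ^ (n - 1) *
        ((if r = 0 then (1 : ℝ) else 0) +
          (-1 : ℝ) ^ (k : ℕ) * (if r = 1 then (1 : ℝ) else 0)) := by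
  have split_summand : ∀ a : Fin n → Fin 2,
      (1 / 2 : ℝ) * (1 + (-1 : ℝ) ^ ((∑ i, (a i : ℕ)) + (k : ℕ))) *
          (-1 : ℝ) ^ (∑ i, (a i : ℕ) * (r i : ℕ)) =
        2⁻¹ * (-1 : ℝ) ^ (∑ i, (a i : ℕ) * (r i : ℕ)) +
          2⁻¹ * (-1 : ℝ) ^ (k : ℕ) * (-1 : ℝ) ^ (∑ i, (a i : ℕ) * ((r + 1) i : ℕ)) := by
    intro a
    rw [← neg_one_pow_sum_add_sum_mul, pow_add, pow_add]
    ring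
  have two_pow : (2 : ℝ) ^ n = 2 * 2 ^ (n - 1) := (mul_pow_sub_one hn.ne' 2).symm
  simp only [split_summand, sum_add_distrib, ← mul_sum, sum_neg_one_pow_sum_mul,
    add_one_eq_zero_iff_fin_two, Fintype.card_fin, two_pow]
  split_ifs <;> ring
end

section
/- For integers n > 5 and m with 0 < m < n, there exists a function g: {0,1}^n → {0,1}^m such that for all k ∈ {0,1}^m and all r ∈ {0,1}^n, |Σ_{a ∈ {0,1}^n} (δ^k_{g(a)} − 2^{−m})(−1)^{a·r}| ≤ n² · (√2)^{n−m}. -/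
/-!
For fixed `k`, `r` and a uniformly random `g`, the summands `(δ^k_{g(a)} - 2^{-m}) (-1)^{a·r}` are
independent, centred, bounded by `1` and of variance at most `2^{-m}`. Since `eˢ ≤ 1 + s + s²`
for `|s| ≤ 1`, each has moment generating function at most `exp (2^{-m} t²)` for `|t| ≤ 1`, hence
the sum at most `exp (2^{n-m} t²)`. A Chernoff bound with a suitable `t ∈ [0, 1]` shows that at
most a fraction `2 e^{-n²/2}` of all `g` violate the bound for a given pair `(k, r)`, and
`2^{m+n+1} e^{-n²/2} < 1` once `n > 4`, so a union bound over all pairs leaves a good `g`.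
Probabilities are counted as cardinalities of sets of functions `g`.
-/

open Finset Real

theorem centered_bernoulli_mgf_le {p s : ℝ} (hp : 0 ≤ p) (hs : |s| ≤ 1) :
    p * exp (s * (1 - p)) + (1 - p) * exp (-(s * p)) ≤ exp (p * s ^ 2) := by
  have hlin : p * exp s + (1 - p) ≤ exp (p * (exp s - 1)) := by
    linarith [add_one_le_exp (p * (exp s - 1))]
  have hquad : exp s - 1 - s ≤ s ^ 2 := (le_abs_self _).trans (abs_exp_sub_one_sub_id_le hs)
  calc p * exp (s * (1 - p)) + (1 - p) * exp (-(s * p))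
      = (p * exp s + (1 - p)) * exp (-(s * p)) := by
        rw [show s * (1 - p) = s + -(s * p) by ring, exp_add]; ring
    _ ≤ exp (p * (exp s - 1)) * exp (-(s * p)) := by gcongr
    _ = exp (p * (exp s - 1 - s)) := by rw [← exp_add]; ring_nf
    _ ≤ exp (p * s ^ 2) := by gcongr

theorem card_filter_ge_mul_exp_le_sum_exp {ι : Type*} (s : Finset ι) (f : ι → ℝ) (B : ℝ)
    {t : ℝ} (ht : 0 ≤ t) :
    #{x ∈ s | B ≤ f x} * exp (t * B) ≤ ∑ x ∈ s, exp (t * f x) := by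
  calc #{x ∈ s | B ≤ f x} * exp (t * B)
      ≤ ∑ x ∈ s with B ≤ f x, exp (t * f x) := by
        rw [← nsmul_eq_mul]
        exact card_nsmul_le_sum _ _ _ fun x hx => by gcongr; exact (mem_filter.1 hx).2
    _ ≤ ∑ x ∈ s, exp (t * f x) :=
        sum_le_sum_of_subset_of_nonneg (filter_subset _ _) fun _ _ _ => (exp_pos _).le

theorem exists_forall_not_of_sum_card_filter_lt {ι G : Type*} [Fintype ι] [Fintype G]
    (P : ι → G → Prop) [∀ i, DecidablePred (P i)]
    (h : ∑ i, #{g | P i g} < Fintype.card G) : ∃ g, ∀ i, ¬ P i g := by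
  classical
  by_contra! hbad
  refine h.not_ge ((card_le_card fun g _ => ?_).trans card_biUnion_le)
  obtain ⟨i, hi⟩ := hbad g
  exact mem_biUnion.2 ⟨i, mem_univ i, mem_filter.2 ⟨mem_univ g, hi⟩⟩

section FiberCorrelation

variable {α β : Type*} [Fintype α] [Fintype β] [DecidableEq β]

theorem sum_exp_centered_indicator_le (k : β) {s : ℝ} (hs : |s| ≤ 1) :
    ∑ v : β, exp (s * ((if v = k then 1 else 0) - (Fintype.card β : ℝ)⁻¹)) ≤
      Fintype.card β * exp ((Fintype.card β : ℝ)⁻¹ * s ^ 2) := by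
  have hβ : 0 < Fintype.card β := Fintype.card_pos_iff.2 ⟨k⟩
  have hN : (Fintype.card β : ℝ) ≠ 0 := by positivity
  have hsplit : ∑ v : β, exp (s * ((if v = k then 1 else 0) - (Fintype.card β : ℝ)⁻¹)) =
      Fintype.card β * ((Fintype.card β : ℝ)⁻¹ * exp (s * (1 - (Fintype.card β : ℝ)⁻¹)) +
        (1 - (Fintype.card β : ℝ)⁻¹) * exp (-(s * (Fintype.card β : ℝ)⁻¹))) := by
    rw [← add_sum_erase _ _ (mem_univ k), if_pos rfl,
      sum_congr rfl fun v hv => by rw [if_neg (ne_of_mem_erase hv)],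
      sum_const, card_erase_of_mem (mem_univ k), card_univ, nsmul_eq_mul, Nat.cast_pred hβ]
    field_simp
    ring_nf
  rw [hsplit]
  gcongr
  exact centered_bernoulli_mgf_le (by positivity) hs

noncomputable def fiberCorrelation (g : α → β) (k : β) (η : α → ℝ) : ℝ :=
  ∑ a, ((if g a = k then 1 else 0) - (Fintype.card β : ℝ)⁻¹) * η a

theorem fiberCorrelation_neg (g : α → β) (k : β) (η : α → ℝ) :
    fiberCorrelation g k (-η) = -fiberCorrelation g k η := by
  simp only [fiberCorrelation, Pi.neg_apply, mul_neg, sum_neg_distrib]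

theorem sum_exp_fiberCorrelation_le [DecidableEq α] (k : β) {η : α → ℝ} (hη : ∀ a, |η a| ≤ 1)
    {t : ℝ} (ht : |t| ≤ 1) :
    ∑ g : α → β, exp (t * fiberCorrelation g k η) ≤
      (Fintype.card β * exp ((Fintype.card β : ℝ)⁻¹ * t ^ 2)) ^ Fintype.card α := by
  have hcoord (a : α) :
      ∑ v : β, exp (η a * t * ((if v = k then 1 else 0) - (Fintype.card β : ℝ)⁻¹)) ≤
        Fintype.card β * exp ((Fintype.card β : ℝ)⁻¹ * t ^ 2) := by
    have hηt : |η a * t| ≤ 1 := by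
      rw [abs_mul]; exact mul_le_one₀ (hη a) (abs_nonneg _) ht
    have hsq : (η a * t) ^ 2 ≤ t ^ 2 := by
      rw [mul_pow, ← sq_abs (η a)]
      exact mul_le_of_le_one_left (sq_nonneg t) (pow_le_one₀ (abs_nonneg _) (hη a))
    refine (sum_exp_centered_indicator_le k hηt).trans ?_
    gcongr
  calc ∑ g : α → β, exp (t * fiberCorrelation g k η)
      = ∑ g : α → β, ∏ a,
          exp (η a * t * ((if g a = k then 1 else 0) - (Fintype.card β : ℝ)⁻¹)) := by
        refine sum_congr rfl fun g _ => ?_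
        rw [fiberCorrelation, mul_sum, exp_sum]
        exact prod_congr rfl fun a _ => by ring_nf
    _ = ∏ a, ∑ v : β, exp (η a * t * ((if v = k then 1 else 0) - (Fintype.card β : ℝ)⁻¹)) :=
        (Fintype.prod_sum fun a v =>
          exp (η a * t * ((if v = k then 1 else 0) - (Fintype.card β : ℝ)⁻¹))).symm
    _ ≤ ∏ _a : α, (Fintype.card β * exp ((Fintype.card β : ℝ)⁻¹ * t ^ 2)) :=
        prod_le_prod (fun _ _ => sum_nonneg fun _ _ => (exp_pos _).le) fun a _ => hcoord a
    _ = _ := by rw [prod_const, card_univ]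

theorem card_fiberCorrelation_ge_le [DecidableEq α] (k : β) {η : α → ℝ} (hη : ∀ a, |η a| ≤ 1)
    {t : ℝ} (ht0 : 0 ≤ t) (ht1 : t ≤ 1) (B : ℝ) :
    (#{g : α → β | B ≤ fiberCorrelation g k η} : ℝ) ≤
      Fintype.card β ^ Fintype.card α *
        exp (Fintype.card α * (Fintype.card β : ℝ)⁻¹ * t ^ 2 - t * B) := by
  have hmarkov := (card_filter_ge_mul_exp_le_sum_exp univ (fiberCorrelation · k η) B ht0).trans
    (sum_exp_fiberCorrelation_le k hη (abs_le.2 ⟨by linarith, ht1⟩))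
  rw [mul_pow, ← exp_nat_mul] at hmarkov
  rw [exp_sub, ← mul_div_assoc, le_div_iff₀ (exp_pos _)]
  convert hmarkov using 3
  ring

theorem card_abs_fiberCorrelation_ge_le [DecidableEq α] (k : β) {η : α → ℝ}
    (hη : ∀ a, |η a| ≤ 1) {t : ℝ} (ht0 : 0 ≤ t) (ht1 : t ≤ 1) (B : ℝ) :
    (#{g : α → β | B ≤ |fiberCorrelation g k η|} : ℝ) ≤
      2 * Fintype.card β ^ Fintype.card α *
        exp (Fintype.card α * (Fintype.card β : ℝ)⁻¹ * t ^ 2 - t * B) := by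
  have hsplit : #{g : α → β | B ≤ |fiberCorrelation g k η|} ≤
      #{g : α → β | B ≤ fiberCorrelation g k η} +
        #{g : α → β | B ≤ fiberCorrelation g k (-η)} := by
    simp only [le_abs, fiberCorrelation_neg, filter_or]
    exact card_union_le _ _
  have hneg : ∀ a, |(-η) a| ≤ 1 := fun a => by rw [Pi.neg_apply, abs_neg]; exact hη a
  calc (#{g : α → β | B ≤ |fiberCorrelation g k η|} : ℝ)
      ≤ #{g : α → β | B ≤ fiberCorrelation g k η} +
          #{g : α → β | B ≤ fiberCorrelation g k (-η)} := by exact_mod_cast hsplit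
    _ ≤ _ := by
        linarith [card_fiberCorrelation_ge_le k hη ht0 ht1 B,
          card_fiberCorrelation_ge_le k hneg ht0 ht1 B]

theorem exists_forall_abs_fiberCorrelation_lt [DecidableEq α] [Nonempty β]
    {ρ : Type*} [Fintype ρ] (η : ρ → α → ℝ) (hη : ∀ r a, |η r a| ≤ 1)
    {t : ℝ} (ht0 : 0 ≤ t) (ht1 : t ≤ 1) {B : ℝ}
    (hB : 2 * Fintype.card β * Fintype.card ρ *
      exp (Fintype.card α * (Fintype.card β : ℝ)⁻¹ * t ^ 2 - t * B) < 1) :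
    ∃ g : α → β, ∀ k r, |fiberCorrelation g k (η r)| < B := by
  obtain ⟨g, hg⟩ := exists_forall_not_of_sum_card_filter_lt
    (fun (kr : β × ρ) g => B ≤ |fiberCorrelation g kr.1 (η kr.2)|) <| by
    suffices h : ∑ kr : β × ρ, (#{g | B ≤ |fiberCorrelation g kr.1 (η kr.2)|} : ℝ) <
        Fintype.card (α → β) by exact_mod_cast h
    calc _ ≤ ∑ _kr : β × ρ, 2 * Fintype.card β ^ Fintype.card α *
          exp (Fintype.card α * (Fintype.card β : ℝ)⁻¹ * t ^ 2 - t * B) :=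
          sum_le_sum fun kr _ => card_abs_fiberCorrelation_ge_le kr.1 (hη kr.2) ht0 ht1 B
      _ = 2 * Fintype.card β * Fintype.card ρ *
          exp (Fintype.card α * (Fintype.card β : ℝ)⁻¹ * t ^ 2 - t * B) *
            Fintype.card β ^ Fintype.card α := by
          rw [sum_const, card_univ, Fintype.card_prod, nsmul_eq_mul]; push_cast; ring
      _ < Fintype.card (α → β) := by
          rw [Fintype.card_fun]; push_cast
          exact mul_lt_of_lt_one_left (by positivity) hB
  exact ⟨g, fun k r => not_le.1 (hg (k, r))⟩

end FiberCorrelation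

/- The Chernoff exponent `t²s² - tcs` is minimised at `t = c / 2s`; when that leaves `[0, 1]`,
`t = 1` already does better than `-c / 2`. -/
theorem exists_mem_Icc_sq_mul_sq_sub_le {s c : ℝ} (hs : 1 ≤ s) (hc : 2 ≤ c) :
    ∃ t ∈ Set.Icc (0 : ℝ) 1, t ^ 2 * s ^ 2 - t * (c * s) ≤ -(c / 2) := by
  rcases le_or_gt c (2 * s) with hcs | hcs
  · refine ⟨c / (2 * s), ⟨by positivity, (div_le_one (by positivity)).2 hcs⟩, ?_⟩
    have : (c / (2 * s)) ^ 2 * s ^ 2 - c / (2 * s) * (c * s) = -(c ^ 2 / 4) := by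
      field_simp; ring
    rw [this]; nlinarith
  · exact ⟨1, ⟨zero_le_one, le_rfl⟩, by nlinarith⟩

theorem four_pow_mul_exp_neg_sq_lt_one {n : ℕ} (hn : 4 < n) :
    (4 : ℝ) ^ n * exp (-((n : ℝ) ^ 2 / 2)) < 1 := by
  have hn' : (4 : ℝ) < n := by exact_mod_cast hn
  calc (4 : ℝ) ^ n * exp (-((n : ℝ) ^ 2 / 2))
      ≤ exp 1 ^ (2 * n) * exp (-((n : ℝ) ^ 2 / 2)) := by
        rw [pow_mul]; gcongr; nlinarith [add_one_le_exp (1 : ℝ)]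
    _ = exp (2 * n - (n : ℝ) ^ 2 / 2) := by
        rw [← exp_nat_mul, ← exp_add]; push_cast; ring_nf
    _ < 1 := exp_lt_one_iff.2 (by nlinarith)

theorem exists_m_bit_extractor_function_general {n m : ℕ} (hn : 5 < n) (hmn : m < n) :
    ∃ g : (Fin n → Fin 2) → (Fin m → Fin 2),
      ∀ (k : Fin m → Fin 2) (r : Fin n → Fin 2),
        |∑ a : Fin n → Fin 2,
            (((if g a = k then (1 : ℝ) else 0) - (2 : ℝ) ^ (-(m : ℤ))) *
              (-1 : ℝ) ^ (∑ i, (a i : ℕ) * (r i : ℕ)))| ≤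
          (n : ℝ) ^ 2 * Real.sqrt 2 ^ (n - m) := by
  have hcard (l : ℕ) : Fintype.card (Fin l → Fin 2) = 2 ^ l := by simp
  have hvar : (Fintype.card (Fin n → Fin 2) : ℝ) * (Fintype.card (Fin m → Fin 2) : ℝ)⁻¹ =
      (√2 ^ (n - m)) ^ 2 := by
    rw [← pow_mul, mul_comm (n - m), pow_mul, sq_sqrt zero_le_two, pow_sub₀ _ two_ne_zero hmn.le,
      hcard, hcard]
    push_cast
    rfl
  obtain ⟨t, ⟨ht0, ht1⟩, ht⟩ := exists_mem_Icc_sq_mul_sq_sub_le (s := √2 ^ (n - m))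
    (c := (n : ℝ) ^ 2) (one_le_pow₀ (one_le_sqrt.2 one_le_two)) (by norm_cast; nlinarith)
  obtain ⟨g, hg⟩ := exists_forall_abs_fiberCorrelation_lt
    (fun (r a : Fin n → Fin 2) => (-1) ^ (∑ i, (a i : ℕ) * (r i : ℕ))) (by simp [abs_pow])
    ht0 ht1
    (B := (n : ℝ) ^ 2 * √2 ^ (n - m)) <| by
    have hpow : (2 : ℝ) * 2 ^ m * 2 ^ n ≤ 4 ^ n := by
      calc (2 : ℝ) * 2 ^ m * 2 ^ n = 2 ^ (m + n + 1) := by ring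
        _ ≤ 2 ^ (2 * n) := pow_le_pow_right₀ one_le_two (by omega)
        _ = 4 ^ n := by rw [pow_mul]; norm_num
    calc _ ≤ (4 : ℝ) ^ n * exp (-((n : ℝ) ^ 2 / 2)) := by
          rw [hvar, hcard, hcard]
          push_cast
          exact mul_le_mul hpow (exp_le_exp.2 (by linarith)) (exp_pos _).le (by positivity)
      _ < 1 := four_pow_mul_exp_neg_sq_lt_one (by omega)
  refine ⟨g, fun k r => ?_⟩
  rw [show (2 : ℝ) ^ (-(m : ℤ)) = (Fintype.card (Fin m → Fin 2) : ℝ)⁻¹ by simp [hcard]]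
  exact (hg k r).le

/-- Existence of `m`-bit seedless extractor functions: for `n > 5` and `0 < m < n` there is
`g : {0,1}ⁿ → {0,1}ᵐ` with `|Σ_a (δ^k_{g(a)} - 2^{-m})(-1)^{a·r}| ≤ n² √2^{n-m}` for all
`k` and `r`. -/
theorem exists_m_bit_extractor_function {n m : ℕ} (hn : 5 < n) (hm : 0 < m) (hmn : m < n) :
    ∃ g : (Fin n → Fin 2) → (Fin m → Fin 2),
      ∀ (k : Fin m → Fin 2) (r : Fin n → Fin 2),
        |∑ a : Fin n → Fin 2,
            (((if g a = k then (1 : ℝ) else 0) - (2 : ℝ) ^ (-(m : ℤ))) *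
              (-1 : ℝ) ^ (∑ i, (a i : ℕ) * (r i : ℕ)))| ≤
          (n : ℝ) ^ 2 * Real.sqrt 2 ^ (n - m) :=
  exists_m_bit_extractor_function_general hn hmn
end

section
/- Let A_i be finite-dimensional Hilbert spaces for i = 1,...,n, let ρ be a density operator on (⊗_i A_i) ⊗ E for an auxiliary space E, and let C_i, S_i be Hermitian operators on A_i ⊗ B_i (with C_i acting trivially on B_i and satisfying ±C_i ≤ S_i after extending ρ to include the B_i factors). Then ‖tr_{A}(ρ_{AE} · ∏_i C_i)‖₁ ≤ tr(ρ_{AB} · ∏_i S_i), where the partial trace is over A = ⊗_i A_i. -/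
/-!
`X = tr_A (ρ_AE (⊗ᵢ Cᵢ))` is Hermitian, so `‖X‖₁ = tr (X (P - Q))` for the spectral projections
`P`, `Q` onto its nonnegative and negative parts, `P + Q = 1`. Dualizing the partial traces,
`tr (X K) = tr (ρ (C̃ ⊗ K))` with `C̃ = ⊗ᵢ (Cᵢ ⊗ 1_{Bᵢ})`, and the right-hand side is
`tr (ρ (S̃ ⊗ 1))` with `S̃ = ⊗ᵢ Sᵢ`. The hypotheses tensorize to `±C̃ ≤ S̃` by induction on the
factors, using `2 (S ⊗ S' ∓ C ⊗ C') = (S ± C) ⊗ (S' ∓ C') + (S ∓ C) ⊗ (S' ± C')`. Hence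
`S̃ ⊗ 1 - C̃ ⊗ (P - Q) = (S̃ - C̃) ⊗ P + (S̃ + C̃) ⊗ Q` is positive, and so is its trace against `ρ`.
-/

open Matrix ComplexOrder

/-- The trace norm `‖X‖₁ = tr √(Xᴴ X)` of a matrix. -/
noncomputable def traceNorm {n : Type*} [Fintype n] [DecidableEq n] (X : Matrix n n ℂ) : ℝ :=
  (((((Matrix.posSemidef_conjTranspose_mul_self X).1.eigenvectorUnitary : Matrix n n ℂ) *
      diagonal (fun i => ((Real.sqrt ((Matrix.posSemidef_conjTranspose_mul_self X).1.eigenvalues i) : ℝ) : ℂ)) *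
      (star ((Matrix.posSemidef_conjTranspose_mul_self X).1.eigenvectorUnitary : Matrix n n ℂ)))).trace).re

/-- Partial trace over the first tensor factor. -/
noncomputable def ptraceLeft {α β : Type*} [Fintype α]
    (M : Matrix (α × β) (α × β) ℂ) : Matrix β β ℂ :=
  Matrix.of fun b b' => ∑ a, M (a, b) (a, b')

open scoped MatrixOrder Kronecker

namespace Matrix

section TraceNorm

variable {E : Type*} [Fintype E] [DecidableEq E]

lemma traceNorm_eq_re_trace_abs (X : Matrix E E ℂ) : traceNorm X = (CFC.abs X).trace.re := by
  have hXX := posSemidef_conjTranspose_mul_self X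
  rw [CFC.abs, star_eq_conjTranspose, CFC.sqrt_eq_real_sqrt _ hXX.nonneg, cfcₙ_eq_cfc,
    hXX.1.cfc_eq, IsHermitian.cfc, Unitary.conjStarAlgAut_apply]
  rfl

lemma IsHermitian.exists_traceNorm_eq {X : Matrix E E ℂ} (hX : X.IsHermitian) :
    ∃ P Q : Matrix E E ℂ, P.PosSemidef ∧ Q.PosSemidef ∧ P + Q = 1 ∧
      traceNorm X = ((X * (P - Q)).trace).re := by
  have hcont (f : ℝ → ℝ) : ContinuousOn f (spectrum ℝ X) := X.finite_real_spectrum.continuousOn f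
  set p : ℝ → ℝ := fun x => if 0 ≤ x then 1 else 0
  set q : ℝ → ℝ := fun x => if 0 ≤ x then 0 else 1
  have hp : ∀ x, 0 ≤ p x := fun x => by simp only [p]; split_ifs <;> norm_num
  have hq : ∀ x, 0 ≤ q x := fun x => by simp only [q]; split_ifs <;> norm_num
  refine ⟨cfc p X, cfc q X, nonneg_iff_posSemidef.mp (cfc_nonneg fun x _ => hp x),
    nonneg_iff_posSemidef.mp (cfc_nonneg fun x _ => hq x), ?_, ?_⟩
  · rw [← cfc_add X p q (hcont p) (hcont q), ← cfc_one ℝ X]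
    refine cfc_congr fun x _ => ?_
    simp only [p, q]; split_ifs <;> norm_num
  · rw [traceNorm_eq_re_trace_abs, CFC.abs_eq_cfc_norm X hX.isSelfAdjoint,
      ← cfc_sub p q X (hcont p) (hcont q)]
    nth_rw 2 [← cfc_id' ℝ X]
    rw [← cfc_mul _ _ X (hcont _) (hcont _)]
    refine congrArg (fun M : Matrix E E ℂ => M.trace.re) (cfc_congr fun x _ => ?_)
    simp only [p, q, Real.norm_eq_abs]
    split_ifs with h
    · rw [abs_of_nonneg h]; ring
    · rw [abs_of_neg (not_le.mp h)]; ring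

end TraceNorm

section Hadamard

variable {m ι : Type*}

lemma posSemidef_hadamard_sub_and_add {S C S' C' : Matrix m m ℂ}
    (h : (S - C).PosSemidef ∧ (S + C).PosSemidef)
    (h' : (S' - C').PosSemidef ∧ (S' + C').PosSemidef) :
    (S ⊙ S' - C ⊙ C').PosSemidef ∧ (S ⊙ S' + C ⊙ C').PosSemidef := by
  have half : (0 : ℂ) ≤ 2⁻¹ := inv_nonneg.mpr zero_le_two
  have hsub : S ⊙ S' - C ⊙ C' = (2⁻¹ : ℂ) • ((S + C) ⊙ (S' - C') + (S - C) ⊙ (S' + C')) := by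
    ext p q
    simp only [Matrix.sub_apply, Matrix.add_apply, hadamard_apply, Matrix.smul_apply, smul_eq_mul]
    ring
  have hadd : S ⊙ S' + C ⊙ C' = (2⁻¹ : ℂ) • ((S + C) ⊙ (S' + C') + (S - C) ⊙ (S' - C')) := by
    ext p q
    simp only [Matrix.sub_apply, Matrix.add_apply, hadamard_apply, Matrix.smul_apply, smul_eq_mul]
    ring
  rw [hsub, hadd]
  exact ⟨((h.2.hadamard h'.1).add (h.1.hadamard h'.2)).smul half,
    ((h.2.hadamard h'.2).add (h.1.hadamard h'.1)).smul half⟩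

lemma posSemidef_prod_sub_and_add [Fintype m] (s : Finset ι) {S C : ι → Matrix m m ℂ}
    (h : ∀ i ∈ s, (S i - C i).PosSemidef ∧ (S i + C i).PosSemidef) :
    ((of fun p q => ∏ i ∈ s, S i p q) - of fun p q => ∏ i ∈ s, C i p q).PosSemidef ∧
      ((of fun p q => ∏ i ∈ s, S i p q) + of fun p q => ∏ i ∈ s, C i p q).PosSemidef := by
  classical
  induction s using Finset.induction with
  | empty =>
    have hJ : (of fun _ _ => (1 : ℂ) : Matrix m m ℂ).PosSemidef := by
      simpa [vecMulVec] using posSemidef_vecMulVec_self_star (1 : m → ℂ)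
    simp only [Finset.prod_empty, sub_self, ← two_smul ℂ]
    exact ⟨PosSemidef.zero, hJ.smul zero_le_two⟩
  | insert a s ha ih =>
    have hprod (M : ι → Matrix m m ℂ) :
        (of fun p q => ∏ i ∈ insert a s, M i p q) = M a ⊙ of fun p q => ∏ i ∈ s, M i p q := by
      ext p q; simp [Finset.prod_insert ha]
    rw [hprod, hprod]
    exact posSemidef_hadamard_sub_and_add (h a (Finset.mem_insert_self a s))
      (ih fun i hi => h i (Finset.mem_insert_of_mem hi))

end Hadamard

lemma IsHermitian.kronecker {m n : Type*} {A : Matrix m m ℂ} {B : Matrix n n ℂ}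
    (hA : A.IsHermitian) (hB : B.IsHermitian) : (A ⊗ₖ B).IsHermitian := by
  rw [IsHermitian, conjTranspose_kronecker, hA.eq, hB.eq]

section PiKronecker

variable {ι : Type*} [Fintype ι] {κ : ι → Type*}

def piKronecker (M : ∀ i, Matrix (κ i) (κ i) ℂ) : Matrix (∀ i, κ i) (∀ i, κ i) ℂ :=
  of fun p q => ∏ i, M i (p i) (q i)

lemma IsHermitian.piKronecker {M : ∀ i, Matrix (κ i) (κ i) ℂ} (hM : ∀ i, (M i).IsHermitian) :
    (piKronecker M).IsHermitian := by
  ext p q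
  simp [Matrix.piKronecker, star_prod, fun i => (hM i).apply]

lemma posSemidef_piKronecker_sub_and_add [DecidableEq ι] [∀ i, Fintype (κ i)]
    {S C : ∀ i, Matrix (κ i) (κ i) ℂ} (h : ∀ i, (S i - C i).PosSemidef ∧ (S i + C i).PosSemidef) :
    (piKronecker S - piKronecker C).PosSemidef ∧ (piKronecker S + piKronecker C).PosSemidef :=
  -- `⊗ᵢ Mᵢ` is the entrywise product of the `Mᵢ` pulled back along the coordinate projections
  posSemidef_prod_sub_and_add (m := ∀ i, κ i) Finset.univ
    (S := fun i => (S i).submatrix (· i) (· i)) (C := fun i => (C i).submatrix (· i) (· i))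
    fun i _ => ⟨(h i).1.submatrix (fun p : ∀ i, κ i => p i),
      (h i).2.submatrix (fun p : ∀ i, κ i => p i)⟩

lemma prod_one_apply [∀ i, DecidableEq (κ i)] (p q : ∀ i, κ i) :
    ∏ i, (1 : Matrix (κ i) (κ i) ℂ) (p i) (q i) = (1 : Matrix (∀ i, κ i) (∀ i, κ i) ℂ) p q := by
  by_cases hpq : p = q
  · subst hpq; simp
  · obtain ⟨i, hi⟩ := Function.ne_iff.mp hpq
    rw [one_apply_ne hpq]
    exact Finset.prod_eq_zero (Finset.mem_univ i) (one_apply_ne hi)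

lemma piKronecker_kronecker_one {β : ι → Type*} [∀ i, DecidableEq (β i)]
    (M : ∀ i, Matrix (κ i) (κ i) ℂ) :
    (piKronecker fun i => M i ⊗ₖ (1 : Matrix (β i) (β i) ℂ)).submatrix
        (fun p i => (p.1 i, p.2 i)) (fun p i => (p.1 i, p.2 i)) =
      piKronecker M ⊗ₖ (1 : Matrix (∀ i, β i) (∀ i, β i) ℂ) := by
  ext p q
  simp [piKronecker, Finset.prod_mul_distrib, prod_one_apply]

end PiKronecker

section PartialTrace

variable {α β E : Type*} [Fintype α] [Fintype β] [Fintype E]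

lemma trace_ptraceLeft_mul [DecidableEq α] (M : Matrix (α × β) (α × β) ℂ) (K : Matrix β β ℂ) :
    (ptraceLeft M * K).trace = (M * (1 ⊗ₖ K)).trace := by
  simp only [trace, diag_apply, mul_apply, ptraceLeft, of_apply, kroneckerMap_apply, one_apply,
    Fintype.sum_prod_type, ite_mul, one_mul, zero_mul, mul_ite, mul_zero, Finset.sum_mul]
  conv_rhs => enter [2, a, 2, b]; rw [Finset.sum_comm]
  simp only [Finset.sum_ite_eq', Finset.mem_univ, if_true]
  conv_rhs => rw [Finset.sum_comm]; enter [2, b]; rw [Finset.sum_comm]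

lemma trace_ptraceRight_mul [DecidableEq E] (ρ : Matrix (α × E) (α × E) ℂ) (M : Matrix α α ℂ) :
    ((of fun a a' => ∑ e, ρ (a, e) (a', e)) * M).trace = (ρ * (M ⊗ₖ 1)).trace := by
  simp only [trace, diag_apply, mul_apply, of_apply, kroneckerMap_apply, one_apply,
    Fintype.sum_prod_type, mul_ite, mul_one, mul_zero, Finset.sum_mul, Finset.sum_ite_eq',
    Finset.mem_univ, if_true]
  exact Finset.sum_congr rfl fun _ _ => Finset.sum_comm

lemma trace_ptraceMid_mul_kronecker [DecidableEq β] (ρ : Matrix ((α × β) × E) ((α × β) × E) ℂ)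
    (M : Matrix α α ℂ) (K : Matrix E E ℂ) :
    ((of fun p q : α × E => ∑ b, ρ ((p.1, b), p.2) ((q.1, b), q.2)) * (M ⊗ₖ K)).trace =
      (ρ * ((M ⊗ₖ 1) ⊗ₖ K)).trace := by
  simp only [trace, diag_apply, mul_apply, of_apply, kroneckerMap_apply, one_apply,
    Fintype.sum_prod_type, mul_ite, ite_mul, mul_one, mul_zero, zero_mul, Finset.sum_mul]
  conv_rhs => enter [2, a, 2, b, 2, e, 2, a']; rw [Finset.sum_comm]
  simp only [Finset.sum_ite_eq', Finset.mem_univ, if_true]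
  conv_rhs =>
    enter [2, a]; rw [Finset.sum_comm]
    enter [2, e]; rw [Finset.sum_comm]
    enter [2, a']; rw [Finset.sum_comm]

end PartialTrace

section Trace

variable {m E : Type*} [Fintype m] [Fintype E]

lemma PosSemidef.re_trace_mul_nonneg {A B : Matrix m m ℂ} (hA : A.PosSemidef)
    (hB : B.PosSemidef) : 0 ≤ (A * B).trace.re := by
  classical
  obtain ⟨b, rfl⟩ := CStarAlgebra.nonneg_iff_eq_star_mul_self.mp hB.nonneg
  rw [star_eq_conjTranspose, ← Matrix.mul_assoc, trace_mul_cycle]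
  exact (Complex.nonneg_iff.mp (hA.mul_mul_conjTranspose_same b).trace_nonneg).1

lemma isHermitian_of_trace_mul_eq_trace_mul_kronecker {X : Matrix E E ℂ}
    {ρ : Matrix (m × E) (m × E) ℂ} {D : Matrix m m ℂ} (hρ : ρ.IsHermitian) (hD : D.IsHermitian)
    (h : ∀ K, (X * K).trace = (ρ * (D ⊗ₖ K)).trace) : X.IsHermitian := by
  have hstar (K : Matrix E E ℂ) : star (X * K).trace = (X * Kᴴ).trace := by
    rw [h, h, ← trace_conjTranspose, conjTranspose_mul, hρ.eq, conjTranspose_kronecker, hD.eq,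
      trace_mul_comm]
  rw [IsHermitian, ext_iff_trace_mul_left]
  intro K
  calc (K * Xᴴ).trace = star (X * Kᴴ).trace := by
        rw [← trace_conjTranspose, conjTranspose_mul, conjTranspose_conjTranspose]
    _ = (X * K).trace := by rw [hstar, conjTranspose_conjTranspose]
    _ = (K * X).trace := trace_mul_comm X K

lemma re_trace_mul_kronecker_le [DecidableEq E] {ρ : Matrix (m × E) (m × E) ℂ} {T D : Matrix m m ℂ}
    {P Q : Matrix E E ℂ} (hρ : ρ.PosSemidef) (hsub : (T - D).PosSemidef)
    (hadd : (T + D).PosSemidef) (hP : P.PosSemidef) (hQ : Q.PosSemidef) (hPQ : P + Q = 1) :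
    (ρ * (D ⊗ₖ (P - Q))).trace.re ≤ (ρ * (T ⊗ₖ 1)).trace.re := by
  have hsplit : T ⊗ₖ 1 - D ⊗ₖ (P - Q) = (T - D) ⊗ₖ P + (T + D) ⊗ₖ Q := by
    rw [← hPQ]
    ext p q
    simp only [kroneckerMap_apply, Matrix.sub_apply, Matrix.add_apply]
    ring
  have hgap := hρ.re_trace_mul_nonneg ((hsub.kronecker hP).add (hadd.kronecker hQ))
  rw [← hsplit, Matrix.mul_sub, trace_sub, Complex.sub_re] at hgap
  linarith

end Trace

end Matrix

theorem traceNorm_correlator_le_shifted_CHSH_general {n dE : ℕ} {dA dB : Fin n → ℕ}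
    (ρ : Matrix (((∀ i, Fin (dA i)) × (∀ i, Fin (dB i))) × Fin dE)
                (((∀ i, Fin (dA i)) × (∀ i, Fin (dB i))) × Fin dE) ℂ)
    (hρ : ρ.PosSemidef)
    (C : ∀ i, Matrix (Fin (dA i)) (Fin (dA i)) ℂ)
    (S : ∀ i, Matrix (Fin (dA i) × Fin (dB i)) (Fin (dA i) × Fin (dB i)) ℂ)
    (hC : ∀ i, (C i).IsHermitian)
    (hineq : ∀ i,
      (S i - Matrix.of fun p q : Fin (dA i) × Fin (dB i) =>
        C i p.1 q.1 * (if p.2 = q.2 then 1 else 0)).PosSemidef ∧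
      (S i + Matrix.of fun p q : Fin (dA i) × Fin (dB i) =>
        C i p.1 q.1 * (if p.2 = q.2 then 1 else 0)).PosSemidef) :
    let ρAE : Matrix ((∀ i, Fin (dA i)) × Fin dE) ((∀ i, Fin (dA i)) × Fin dE) ℂ :=
      Matrix.of fun p q => ∑ b, ρ ((p.1, b), p.2) ((q.1, b), q.2)
    let ρAB : Matrix ((∀ i, Fin (dA i)) × (∀ i, Fin (dB i)))
        ((∀ i, Fin (dA i)) × (∀ i, Fin (dB i))) ℂ :=
      Matrix.of fun p q => ∑ e, ρ (p, e) (q, e)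
    let CtensE : Matrix ((∀ i, Fin (dA i)) × Fin dE) ((∀ i, Fin (dA i)) × Fin dE) ℂ :=
      Matrix.of fun p q => (∏ i, C i (p.1 i) (q.1 i)) * (if p.2 = q.2 then 1 else 0)
    let Stens : Matrix ((∀ i, Fin (dA i)) × (∀ i, Fin (dB i)))
        ((∀ i, Fin (dA i)) × (∀ i, Fin (dB i))) ℂ :=
      Matrix.of fun p q => ∏ i, S i (p.1 i, p.2 i) (q.1 i, q.2 i)
    traceNorm (ptraceLeft (ρAE * CtensE)) ≤ ((ρAB * Stens).trace).re := by
  intro ρAE ρAB CtensE Stens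
  let shuffle (p : (∀ i, Fin (dA i)) × (∀ i, Fin (dB i))) i := (p.1 i, p.2 i)
  let Ct := piKronecker C ⊗ₖ (1 : Matrix (∀ i, Fin (dB i)) (∀ i, Fin (dB i)) ℂ)
  have hX (K : Matrix (Fin dE) (Fin dE) ℂ) :
      (ptraceLeft (ρAE * CtensE) * K).trace = (ρ * (Ct ⊗ₖ K)).trace := by
    rw [trace_ptraceLeft_mul, Matrix.mul_assoc, show CtensE = piKronecker C ⊗ₖ 1 from rfl,
      ← mul_kronecker_mul, Matrix.mul_one, Matrix.one_mul]
    exact trace_ptraceMid_mul_kronecker ρ _ K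
  have hXherm : (ptraceLeft (ρAE * CtensE)).IsHermitian :=
    isHermitian_of_trace_mul_eq_trace_mul_kronecker hρ.1
      ((IsHermitian.piKronecker hC).kronecker isHermitian_one) hX
  obtain ⟨P, Q, hP, hQ, hPQ, hnorm⟩ := hXherm.exists_traceNorm_eq
  have hStens : Stens = (piKronecker S).submatrix shuffle shuffle := rfl
  have hCt : Ct = (piKronecker fun i => C i ⊗ₖ (1 : Matrix (Fin (dB i)) (Fin (dB i)) ℂ)).submatrix
      shuffle shuffle := (piKronecker_kronecker_one C).symm
  have hSC : (Stens - Ct).PosSemidef ∧ (Stens + Ct).PosSemidef := by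
    have h := posSemidef_piKronecker_sub_and_add hineq
    rw [hStens, hCt]
    exact ⟨h.1.submatrix shuffle, h.2.submatrix shuffle⟩
  rw [hnorm, hX, trace_ptraceRight_mul]
  exact re_trace_mul_kronecker_le hρ hSC.1 hSC.2 hP hQ hPQ

/-- Trace-norm bound for the correlator term: if `±(Cᵢ ⊗ 1_{Bᵢ}) ≤ Sᵢ` on each round, then
`‖tr_A (ρ_{AE} ∏ᵢ Cᵢ)‖₁ ≤ tr (ρ_{AB} ∏ᵢ Sᵢ)`. -/
theorem traceNorm_correlator_le_shifted_CHSH {n dE : ℕ} {dA dB : Fin n → ℕ}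
    (ρ : Matrix (((∀ i, Fin (dA i)) × (∀ i, Fin (dB i))) × Fin dE)
                (((∀ i, Fin (dA i)) × (∀ i, Fin (dB i))) × Fin dE) ℂ)
    (hρ : ρ.PosSemidef) (hρtr : ρ.trace = 1)
    (C : ∀ i, Matrix (Fin (dA i)) (Fin (dA i)) ℂ)
    (S : ∀ i, Matrix (Fin (dA i) × Fin (dB i)) (Fin (dA i) × Fin (dB i)) ℂ)
    (hC : ∀ i, (C i).IsHermitian) (hS : ∀ i, (S i).IsHermitian)
    (hineq : ∀ i,
      (S i - Matrix.of fun p q : Fin (dA i) × Fin (dB i) =>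
        C i p.1 q.1 * (if p.2 = q.2 then 1 else 0)).PosSemidef ∧
      (S i + Matrix.of fun p q : Fin (dA i) × Fin (dB i) =>
        C i p.1 q.1 * (if p.2 = q.2 then 1 else 0)).PosSemidef) :
    let ρAE : Matrix ((∀ i, Fin (dA i)) × Fin dE) ((∀ i, Fin (dA i)) × Fin dE) ℂ :=
      Matrix.of fun p q => ∑ b, ρ ((p.1, b), p.2) ((q.1, b), q.2)
    let ρAB : Matrix ((∀ i, Fin (dA i)) × (∀ i, Fin (dB i)))
        ((∀ i, Fin (dA i)) × (∀ i, Fin (dB i))) ℂ :=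
      Matrix.of fun p q => ∑ e, ρ (p, e) (q, e)
    let CtensE : Matrix ((∀ i, Fin (dA i)) × Fin dE) ((∀ i, Fin (dA i)) × Fin dE) ℂ :=
      Matrix.of fun p q => (∏ i, C i (p.1 i) (q.1 i)) * (if p.2 = q.2 then 1 else 0)
    let Stens : Matrix ((∀ i, Fin (dA i)) × (∀ i, Fin (dB i)))
        ((∀ i, Fin (dA i)) × (∀ i, Fin (dB i))) ℂ :=
      Matrix.of fun p q => ∏ i, S i (p.1 i, p.2 i) (q.1 i, q.2 i)
    traceNorm (ptraceLeft (ρAE * CtensE)) ≤ ((ρAB * Stens).trace).re :=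
  traceNorm_correlator_le_shifted_CHSH_general ρ hρ C S hC hineq
end

section
/- Fix real constants μ, ν with μ, ν ≥ 0 and relative frequencies q₀, q₁ ≥ 0 with q₀ + q₁ = 1. If p_e ≥ 0.74 and p_r = 1 − p_e, then for every CHSH value strictly greater than 2 (i.e., q₀ > 3/4) there exist s ∈ (2, 2√2) and α₀, α₁, β ∈ ℝ satisfying the constraints p_r(√2)^{β−1}(μ_s − 4ν_s) + p_e(√2)^{α₀} = 1 and p_r(√2)^{β−1}(μ_s + 4ν_s) + p_e(√2)^{α₁} = 1 such that p_e(α₀q₀ + α₁q₁) + βp_r ≥ 0. -/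
/-- Coefficient `μ_s = 2 (2 - s²/4)^{-1/2}` of the shifted CHSH operator. -/
noncomputable def muCHSH (s : ℝ) : ℝ := 2 / Real.sqrt (2 - s ^ 2 / 4)

/-- Coefficient `ν_s = (s/4) (2 - s²/4)^{-1/2}` of the shifted CHSH operator. -/
noncomputable def nuCHSH (s : ℝ) : ℝ := (s / 4) / Real.sqrt (2 - s ^ 2 / 4)

/-!
At `s = 2` one has `μ₂ ∓ 4ν₂ ∈ {0, 4}`, so the constraints can be solved exactly: with
`√2 ^ (β - 1) = 1 / (4 - 3pₑ)` they force `√2 ^ α₀ = 1 / pₑ` and `√2 ^ α₁ = 1 / (4 - 3pₑ)`.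
The resulting yield, multiplied by `log 2`, is `g(pₑ) + 2pₑ(q₀ - 3/4)(log (4 - 3pₑ) - log pₑ)`,
where `g(p) = (1 - p) log 2 - (3/2) p log p - (1/2)(4 - 3p) log (4 - 3p)` is nonnegative on
`[0.74, 1]` by convexity of `x log x` (it suffices to check the endpoints). So for `pₑ < 1` and
`q₀ > 3/4` the yield is strictly positive at `s = 2`, hence also for `s` slightly above `2` by
continuity; `pₑ = 1` is trivial.
-/

open Real Filter Topology

theorem Real.sqrt_rpow_two_mul_logb {b x : ℝ} (hb : 0 < b) (hb1 : b ≠ 1) (hx : 0 < x) :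
    √b ^ (2 * logb b x) = x := by
  rw [sqrt_eq_rpow, ← rpow_mul hb.le, ← mul_assoc, one_div_mul_cancel two_ne_zero, one_mul,
    rpow_logb hb hb1 hx]

theorem mul_log_lerp_one_le {x t : ℝ} (hx : 0 ≤ x) (ht0 : 0 ≤ t) (ht1 : t ≤ 1) :
    (t * x + (1 - t)) * log (t * x + (1 - t)) ≤ t * (x * log x) := by
  have h := convexOn_mul_log.2 (Set.mem_Ici.2 hx) (Set.mem_Ici.2 zero_le_one) ht0
    (sub_nonneg.2 ht1) (add_sub_cancel t 1)
  simpa only [smul_eq_mul, mul_one, log_one, mul_zero, add_zero] using h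

theorem mul_log_add_mul_log_four_sub_three_mul_le {p : ℝ} (hp : 0.74 ≤ p) (hp1 : p ≤ 1) :
    3 / 2 * (p * log p) + 1 / 2 * ((4 - 3 * p) * log (4 - 3 * p)) ≤ (1 - p) * log 2 := by
  have hend : 111 * log 0.74 + 89 * log 1.78 ≤ 26 * log 2 := by
    have key := log_le_log (by positivity)
      (by norm_num : (89 : ℝ) ^ 89 * 37 ^ 111 ≤ 2 ^ 26 * 50 ^ 200)
    simp only [log_mul, log_pow, ne_eq, pow_eq_zero_iff, OfNat.ofNat_ne_zero, not_false_eq_true,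
      Nat.cast_ofNat] at key
    rw [show (0.74 : ℝ) = 37 / 50 by norm_num, show (1.78 : ℝ) = 89 / 50 by norm_num,
      log_div (by norm_num) (by norm_num), log_div (by norm_num) (by norm_num)]
    linarith
  -- `p` and `4 - 3p` are the same convex combination of `0.74`, `1.78` (respectively) and `1`.
  set t := (1 - p) / 0.26 with ht
  have ht0 : 0 ≤ t := by positivity
  have ht1 : t ≤ 1 := by rw [ht, div_le_one (by norm_num)]; linarith
  have h1 := mul_log_lerp_one_le (by norm_num : (0 : ℝ) ≤ 0.74) ht0 ht1
  have h2 := mul_log_lerp_one_le (by norm_num : (0 : ℝ) ≤ 1.78) ht0 ht1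
  rw [show t * 0.74 + (1 - t) = p by rw [ht]; ring] at h1
  rw [show t * 1.78 + (1 - t) = 4 - 3 * p by rw [ht]; ring] at h2
  have : (1 - p) * log 2 = t * (0.26 * log 2) := by rw [ht]; ring
  nlinarith

theorem muCHSH_two : muCHSH 2 = 2 := by norm_num [muCHSH]

theorem nuCHSH_two : nuCHSH 2 = 1 / 2 := by norm_num [nuCHSH]

theorem continuousAt_muCHSH {s : ℝ} (hs : s ^ 2 < 8) : ContinuousAt muCHSH s := by
  unfold muCHSH
  exact continuousAt_const.div (by fun_prop) (sqrt_ne_zero'.2 (by linarith))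

theorem continuousAt_nuCHSH {s : ℝ} (hs : s ^ 2 < 8) : ContinuousAt nuCHSH s := by
  unfold nuCHSH
  exact (continuousAt_id.div_const 4).div (by fun_prop) (sqrt_ne_zero'.2 (by linarith))

namespace XorSpotCheck

variable {pe : ℝ}

/-- The choice `√2 ^ (β - 1) = 1 / (4 - 3 pₑ)`, optimal at `s = 2` and `q₀ = 3/4`. -/
noncomputable def beta (pe : ℝ) : ℝ := 1 - 2 * logb 2 (4 - 3 * pe)

/-- The value of `√2 ^ α` forced by the constraint `(1 - pₑ) √2 ^ (β - 1) m + pₑ √2 ^ α = 1`. -/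
noncomputable def sqrtTwoPowAlpha (pe m : ℝ) : ℝ := (1 - (1 - pe) / (4 - 3 * pe) * m) / pe

noncomputable def alpha (pe m : ℝ) : ℝ := 2 * logb 2 (sqrtTwoPowAlpha pe m)

noncomputable def yield (pe q0 q1 s : ℝ) : ℝ :=
  pe * (alpha pe (muCHSH s - 4 * nuCHSH s) * q0 + alpha pe (muCHSH s + 4 * nuCHSH s) * q1) +
    beta pe * (1 - pe)

theorem sqrt_two_rpow_beta_sub_one (hpe : pe < 4 / 3) :
    √2 ^ (beta pe - 1) = (4 - 3 * pe)⁻¹ := by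
  have : beta pe - 1 = 2 * logb 2 (4 - 3 * pe)⁻¹ := by rw [beta, logb_inv]; ring
  rw [this, sqrt_rpow_two_mul_logb two_pos (by norm_num) (inv_pos.2 (by linarith))]

theorem constraint_alpha {m : ℝ} (hpe : pe < 4 / 3) (hm : 0 < sqrtTwoPowAlpha pe m) :
    (1 - pe) * √2 ^ (beta pe - 1) * m + pe * √2 ^ alpha pe m = 1 := by
  rcases eq_or_ne pe 0 with rfl | hpe0
  · simp [sqrtTwoPowAlpha] at hm
  rw [sqrt_two_rpow_beta_sub_one hpe, alpha, sqrt_rpow_two_mul_logb two_pos (by norm_num) hm,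
    sqrtTwoPowAlpha]
  field_simp
  ring

theorem sqrtTwoPowAlpha_sub_at_two : sqrtTwoPowAlpha pe (muCHSH 2 - 4 * nuCHSH 2) = pe⁻¹ := by
  norm_num [muCHSH_two, nuCHSH_two, sqrtTwoPowAlpha]

theorem sqrtTwoPowAlpha_add_at_two (hpe0 : pe ≠ 0) (hpe : pe < 4 / 3) :
    sqrtTwoPowAlpha pe (muCHSH 2 + 4 * nuCHSH 2) = (4 - 3 * pe)⁻¹ := by
  have hc : 4 - 3 * pe ≠ 0 := by linarith
  have : 1 - (1 - pe) / (4 - 3 * pe) * 4 = pe / (4 - 3 * pe) := by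
    rw [eq_div_iff hc, sub_mul, mul_right_comm, div_mul_cancel₀ _ hc]; ring
  norm_num [muCHSH_two, nuCHSH_two, sqrtTwoPowAlpha, this, div_div_cancel_left' hpe0]

theorem yield_two_mul_log_two {q0 q1 : ℝ} (hpe0 : 0 < pe) (hpe : pe < 4 / 3) (hq : q0 + q1 = 1) :
    yield pe q0 q1 2 * log 2 =
      ((1 - pe) * log 2 - 3 / 2 * (pe * log pe) - 1 / 2 * ((4 - 3 * pe) * log (4 - 3 * pe))) +
        2 * pe * (q0 - 3 / 4) * (log (4 - 3 * pe) - log pe) := by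
  rw [yield, alpha, alpha, sqrtTwoPowAlpha_sub_at_two, sqrtTwoPowAlpha_add_at_two hpe0.ne' hpe,
    beta, logb, logb, logb, log_inv, log_inv, show q1 = 1 - q0 by linarith]
  field_simp
  ring

theorem yield_two_pos {q0 q1 : ℝ} (hpe : 0.74 ≤ pe) (hpe1 : pe < 1) (hq : q0 + q1 = 1)
    (hq0 : 3 / 4 < q0) : 0 < yield pe q0 q1 2 := by
  have hpe0 : 0 < pe := by linarith
  have hlog : log pe < log (4 - 3 * pe) := log_lt_log hpe0 (by linarith)
  have hg := mul_log_add_mul_log_four_sub_three_mul_le hpe hpe1.le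
  have hgap : 0 < 2 * pe * (q0 - 3 / 4) * (log (4 - 3 * pe) - log pe) :=
    mul_pos (mul_pos (by positivity) (sub_pos.2 hq0)) (sub_pos.2 hlog)
  refine pos_of_mul_pos_left ?_ (log_pos one_lt_two).le
  rw [yield_two_mul_log_two hpe0 (by linarith) hq]
  linarith

theorem eventually_sqrtTwoPowAlpha_pos_and_yield_pos {q0 q1 : ℝ} (hpe : 0.74 ≤ pe) (hpe1 : pe < 1)
    (hq : q0 + q1 = 1) (hq0 : 3 / 4 < q0) :
    ∀ᶠ s in 𝓝 2, 0 < sqrtTwoPowAlpha pe (muCHSH s - 4 * nuCHSH s) ∧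
      0 < sqrtTwoPowAlpha pe (muCHSH s + 4 * nuCHSH s) ∧ 0 < yield pe q0 q1 s := by
  have hpe0 : 0 < pe := by linarith
  have h8 : (2 : ℝ) ^ 2 < 8 := by norm_num
  have hmu := continuousAt_muCHSH h8
  have hnu := continuousAt_nuCHSH h8
  have hw : Continuous (sqrtTwoPowAlpha pe) := by unfold sqrtTwoPowAlpha; fun_prop
  have hw_sub := hw.continuousAt.comp (f := fun s ↦ muCHSH s - 4 * nuCHSH s)
    (hmu.sub (hnu.const_mul 4))
  have hw_add := hw.continuousAt.comp (f := fun s ↦ muCHSH s + 4 * nuCHSH s)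
    (hmu.add (hnu.const_mul 4))
  have hw_sub_two : 0 < sqrtTwoPowAlpha pe (muCHSH 2 - 4 * nuCHSH 2) := by
    rw [sqrtTwoPowAlpha_sub_at_two]; positivity
  have hw_add_two : 0 < sqrtTwoPowAlpha pe (muCHSH 2 + 4 * nuCHSH 2) := by
    rw [sqrtTwoPowAlpha_add_at_two hpe0.ne' (by linarith)]; exact inv_pos.2 (by linarith)
  have hyield : ContinuousAt (yield pe q0 q1) 2 :=
    ((((hw_sub.logb hw_sub_two.ne').const_mul 2).mul continuousAt_const).add
      (((hw_add.logb hw_add_two.ne').const_mul 2).mul continuousAt_const) |>.const_mul pe).add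
      continuousAt_const
  exact (hw_sub.eventually (lt_mem_nhds hw_sub_two)).and ((hw_add.eventually
    (lt_mem_nhds hw_add_two)).and (hyield.eventually (lt_mem_nhds (yield_two_pos hpe hpe1 hq hq0))))

end XorSpotCheck

theorem xor_positive_yield_above_pe_general (pe : ℝ) (hpe : 0.74 ≤ pe) (hpe1 : pe ≤ 1)
    (q0 q1 : ℝ) (hq : q0 + q1 = 1) (hchsh : 3 / 4 < q0) :
    ∃ s ∈ Set.Ioo (2 : ℝ) (2 * Real.sqrt 2), ∃ α0 α1 β : ℝ,
      (1 - pe) * Real.sqrt 2 ^ (β - 1) * (muCHSH s - 4 * nuCHSH s) +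
          pe * Real.sqrt 2 ^ α0 = 1 ∧
      (1 - pe) * Real.sqrt 2 ^ (β - 1) * (muCHSH s + 4 * nuCHSH s) +
          pe * Real.sqrt 2 ^ α1 = 1 ∧
      0 ≤ pe * (α0 * q0 + α1 * q1) + β * (1 - pe) := by
  have h2 : (2 : ℝ) < 2 * √2 := by nlinarith [sq_sqrt (zero_le_two (α := ℝ)), sqrt_nonneg 2]
  rcases hpe1.eq_or_lt with rfl | hpe_lt
  · exact ⟨(2 + 2 * √2) / 2, ⟨by linarith, by linarith⟩, 0, 0, 0, by simp, by simp, by simp⟩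
  obtain ⟨s, ⟨hsub, hadd, hyield⟩, hs⟩ :=
    (((XorSpotCheck.eventually_sqrtTwoPowAlpha_pos_and_yield_pos hpe hpe_lt hq hchsh).filter_mono
      nhdsWithin_le_nhds).and (Ioo_mem_nhdsGT h2)).exists
  have hpe43 : pe < 4 / 3 := by linarith
  exact ⟨s, hs, _, _, _, XorSpotCheck.constraint_alpha hpe43 hsub,
    XorSpotCheck.constraint_alpha hpe43 hadd, hyield.le⟩

/-- If `p_e ≥ 0.74` then for every CHSH value strictly above 2 (i.e. `q₀ > 3/4`) there is a
feasible choice of `s, α₀, α₁, β` satisfying the spot-checking constraints with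
non-negative yield. -/
theorem xor_positive_yield_above_pe (pe : ℝ) (hpe : 0.74 ≤ pe) (hpe1 : pe ≤ 1)
    (q0 q1 : ℝ) (hq0 : 0 ≤ q0) (hq1 : 0 ≤ q1) (hq : q0 + q1 = 1) (hchsh : 3 / 4 < q0) :
    ∃ s ∈ Set.Ioo (2 : ℝ) (2 * Real.sqrt 2), ∃ α0 α1 β : ℝ,
      (1 - pe) * Real.sqrt 2 ^ (β - 1) * (muCHSH s - 4 * nuCHSH s) +
          pe * Real.sqrt 2 ^ α0 = 1 ∧
      (1 - pe) * Real.sqrt 2 ^ (β - 1) * (muCHSH s + 4 * nuCHSH s) +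
          pe * Real.sqrt 2 ^ α1 = 1 ∧
      0 ≤ pe * (α0 * q0 + α1 * q1) + β * (1 - pe) :=
  xor_positive_yield_above_pe_general pe hpe hpe1 q0 q1 hq hchsh
end

section
/- Let A₁, A₂ be Hilbert spaces with Hermitian operators C₁ on A₁ and C₂ on A₂, and S₁, S₂ Hermitian with ±C₁ ≤ S₁ and ±C₂ ≤ S₂. Then ±(C₁ ⊗ C₂) ≤ S₁ ⊗ S₂, proved via the averages (1/2)[(S₁+C₁)⊗(S₂+C₂) + (S₁−C₁)⊗(S₂−C₂)] = S₁⊗S₂ + C₁⊗C₂ ≥ 0 and (1/2)[(S₁+C₁)⊗(S₂−C₂) + (S₁−C₁)⊗(S₂+C₂)] = S₁⊗S₂ − C₁⊗C₂ ≥ 0. -/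
open Matrix ComplexOrder Kronecker

namespace Matrix

section Kronecker

variable {α : Type*} [CommRing α] {l m n p : Type*}

theorem add_kronecker_add_add_sub_kronecker_sub (A B : Matrix l m α) (C D : Matrix n p α) :
    (A + B) ⊗ₖ (C + D) + (A - B) ⊗ₖ (C - D) = 2 • (A ⊗ₖ C + B ⊗ₖ D) := by
  ext ⟨i, j⟩ ⟨k, k'⟩
  simp only [add_apply, sub_apply, smul_apply, kroneckerMap_apply, nsmul_eq_mul]
  ring

theorem add_kronecker_sub_add_sub_kronecker_add (A B : Matrix l m α) (C D : Matrix n p α) :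
    (A + B) ⊗ₖ (C - D) + (A - B) ⊗ₖ (C + D) = 2 • (A ⊗ₖ C - B ⊗ₖ D) := by
  ext ⟨i, j⟩ ⟨k, k'⟩
  simp only [add_apply, sub_apply, smul_apply, kroneckerMap_apply, nsmul_eq_mul]
  ring

end Kronecker

theorem PosSemidef.of_two_nsmul {n 𝕜 : Type*} [RCLike 𝕜] {M : Matrix n n 𝕜}
    (h : (2 • M).PosSemidef) : M.PosSemidef := by
  have half := h.smul (a := (2⁻¹ : ℝ)) (by norm_num)
  rwa [← Nat.cast_smul_eq_nsmul ℝ, smul_smul, Nat.cast_ofNat, inv_mul_cancel₀ two_ne_zero,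
    one_smul] at half

end Matrix

theorem kronecker_loewner_tensorization_general
    {d₁ d₂ : Type*} [Fintype d₁] [Fintype d₂]
    (C₁ S₁ : Matrix d₁ d₁ ℂ) (C₂ S₂ : Matrix d₂ d₂ ℂ)
    (h₁p : (S₁ + C₁).PosSemidef) (h₁m : (S₁ - C₁).PosSemidef)
    (h₂p : (S₂ + C₂).PosSemidef) (h₂m : (S₂ - C₂).PosSemidef) :
    (S₁ ⊗ₖ S₂ - C₁ ⊗ₖ C₂).PosSemidef ∧ (S₁ ⊗ₖ S₂ + C₁ ⊗ₖ C₂).PosSemidef := by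
  constructor
  · apply PosSemidef.of_two_nsmul
    rw [← add_kronecker_sub_add_sub_kronecker_add]
    exact (h₁p.kronecker h₂m).add (h₁m.kronecker h₂p)
  · apply PosSemidef.of_two_nsmul
    rw [← add_kronecker_add_add_sub_kronecker_sub]
    exact (h₁p.kronecker h₂p).add (h₁m.kronecker h₂m)

/-- Two-factor tensorization of the operator inequality `±C ≤ S`:
if `±C₁ ≤ S₁` and `±C₂ ≤ S₂` then `±(C₁ ⊗ C₂) ≤ S₁ ⊗ S₂`. -/
theorem kronecker_loewner_tensorization
    {d₁ d₂ : Type*} [Fintype d₁] [Fintype d₂] [DecidableEq d₁] [DecidableEq d₂]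
    (C₁ S₁ : Matrix d₁ d₁ ℂ) (C₂ S₂ : Matrix d₂ d₂ ℂ)
    (hC₁ : C₁.IsHermitian) (hS₁ : S₁.IsHermitian)
    (hC₂ : C₂.IsHermitian) (hS₂ : S₂.IsHermitian)
    (h₁p : (S₁ + C₁).PosSemidef) (h₁m : (S₁ - C₁).PosSemidef)
    (h₂p : (S₂ + C₂).PosSemidef) (h₂m : (S₂ - C₂).PosSemidef) :
    (S₁ ⊗ₖ S₂ - C₁ ⊗ₖ C₂).PosSemidef ∧ (S₁ ⊗ₖ S₂ + C₁ ⊗ₖ C₂).PosSemidef :=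
  kronecker_loewner_tensorization_general C₁ S₁ C₂ S₂ h₁p h₁m h₂p h₂m
end
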